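/- A Baire topological group G that is Steinhaus satisfies automatic continuity: for every separable topological group H and every group homomorphism φ : G → H, and every neighborhood V of 1 in H, there is a neighborhood U of 1 in G with φ(U) ⊆ V. -/

import Mathlib

open Pointwise Topology

/-- A topological group `G` is Steinhaus with exponent `n` if for every symmetric `W ⊆ G`
such that countably many left translates of `W` cover `G`, the power `Wⁿ` contains a
neighborhood of the identity. -/
def Steinhaus (G : Type*) [Group G] [TopologicalSpace G] (n : ℕ) : Prop :=
  ∀ W : Set G, W⁻¹ = W → (∃ g : ℕ → G, (⋃ i, g i • W) = Set.univ) →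
    W ^ n ∈ 𝓝 (1 : G)

/-!
Pick `U ∈ 𝓝 1` in `H` with `(U⁻¹ U)ⁿ ⊆ V` and put `W = φ⁻¹(U⁻¹ U)`, a symmetric set. If
`(hᵢ)` is dense in `H`, then `φ(G) ⊆ ⋃ᵢ hᵢ U`, and choosing `gᵢ` with `φ(gᵢ) ∈ hᵢ U` whenever
possible gives `G = ⋃ᵢ gᵢ W`. The Steinhaus property makes `Wⁿ` a neighborhood of `1`, and
`φ(Wⁿ) ⊆ (U⁻¹ U)ⁿ ⊆ V`.
-/

theorem exists_mem_nhds_one_pow_subset {M : Type*} [Monoid M] [TopologicalSpace M]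
    [ContinuousMul M] {V : Set M} (hV : V ∈ 𝓝 (1 : M)) (n : ℕ) :
    ∃ U ∈ 𝓝 (1 : M), U ^ n ⊆ V := by
  induction n generalizing V with
  | zero => exact ⟨Set.univ, Filter.univ_mem, by simpa using mem_of_mem_nhds hV⟩
  | succ n ih =>
    obtain ⟨W, hW, hWW⟩ := exists_nhds_one_split hV
    obtain ⟨U, hU, hUW⟩ := ih hW
    refine ⟨U ∩ W, Filter.inter_mem hU hW, ?_⟩
    rw [pow_succ]
    rintro _ ⟨a, ha, b, hb, rfl⟩
    exact hWW a (hUW (Set.pow_subset_pow_left Set.inter_subset_left ha)) b hb.2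

theorem exists_mem_nhds_one_inv_mul_subset {G : Type*} [Group G] [TopologicalSpace G]
    [IsTopologicalGroup G] {V : Set G} (hV : V ∈ 𝓝 (1 : G)) :
    ∃ U ∈ 𝓝 (1 : G), U⁻¹ * U ⊆ V := by
  obtain ⟨W, hW, hWV⟩ := exists_nhds_split_inv hV
  refine ⟨W⁻¹, inv_mem_nhds_one G hW, ?_⟩
  rintro _ ⟨a, ha, b, hb, rfl⟩
  simpa [div_eq_mul_inv] using hWV _ ha _ hb

theorem MonoidHom.exists_seq_iUnion_smul_preimage_inv_mul_eq_univ {G H : Type*} [Group G]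
    [Group H] [TopologicalSpace H] [IsTopologicalGroup H] [TopologicalSpace.SeparableSpace H]
    (φ : G →* H) {U : Set H} (hU : U ∈ 𝓝 (1 : H)) :
    ∃ g : ℕ → G, ⋃ i, g i • φ ⁻¹' (U⁻¹ * U) = Set.univ := by
  have : Nonempty H := ⟨1⟩
  obtain ⟨d, hd⟩ := TopologicalSpace.exists_dense_seq H
  have hmeet (x : G) : ∃ i, (d i)⁻¹ * φ x ∈ U := by
    have : (fun h : H ↦ h⁻¹ * φ x) ⁻¹' U ∈ 𝓝 (φ x) :=
      (continuous_inv.mul continuous_const).continuousAt.preimage_mem_nhds (by simpa using hU)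
    exact hd.mem_nhds this
  choose i hi using hmeet
  refine ⟨Function.invFun i, Set.eq_univ_of_forall fun x ↦ Set.mem_iUnion.2 ⟨i x, ?_⟩⟩
  set y := Function.invFun i (i x)
  have hy := hi y
  rw [Function.invFun_eq (f := i) ⟨x, rfl⟩] at hy
  refine Set.mem_smul_set_iff_inv_smul_mem.2 ⟨((d (i x))⁻¹ * φ y)⁻¹, by simpa using hy,
    _, hi x, ?_⟩
  simp [mul_assoc]

theorem stmt3_general {G H : Type*} [Group G] [TopologicalSpace G] [Group H] [TopologicalSpace H]
    [IsTopologicalGroup H] [TopologicalSpace.SeparableSpace H] (n : ℕ) (hS : Steinhaus G n)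
    (φ : G →* H) (V : Set H) (hV : V ∈ 𝓝 (1 : H)) :
    ∃ U ∈ 𝓝 (1 : G), φ '' U ⊆ V := by
  obtain ⟨U₀, hU₀, hU₀V⟩ := exists_mem_nhds_one_pow_subset hV n
  obtain ⟨U, hU, hUU₀⟩ := exists_mem_nhds_one_inv_mul_subset hU₀
  set W := φ ⁻¹' (U⁻¹ * U)
  have hW : W⁻¹ = W := by
    ext x
    simp only [W, Set.mem_inv, Set.mem_preimage, map_inv]
    rw [← Set.mem_inv, mul_inv_rev, inv_inv]
  refine ⟨W ^ n, hS W hW (φ.exists_seq_iUnion_smul_preimage_inv_mul_eq_univ hU), ?_⟩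
  calc φ '' W ^ n = (φ '' W) ^ n := Set.image_pow φ W n
    _ ⊆ U₀ ^ n := Set.pow_subset_pow_left ((Set.image_preimage_subset φ _).trans hUU₀)
    _ ⊆ V := hU₀V

/-- A Baire Steinhaus topological group satisfies automatic continuity: for every
homomorphism `φ` to a separable group and every neighborhood `V` of `1` in `H`, there is
a neighborhood `U` of `1` in `G` with `φ(U) ⊆ V`. -/
theorem stmt3 {G H : Type*} [Group G] [TopologicalSpace G] [IsTopologicalGroup G]
    [BaireSpace G] [Group H] [TopologicalSpace H] [IsTopologicalGroup H]
    [TopologicalSpace.SeparableSpace H] (n : ℕ) (hS : Steinhaus G n)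
    (φ : G →* H) (V : Set H) (hV : V ∈ 𝓝 (1 : H)) :
    ∃ U ∈ 𝓝 (1 : G), φ '' U ⊆ V :=
  stmt3_general n hS φ V hV
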